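/- A d-dimensional (not necessarily pure) simplicial complex Δ is shellable if and only if it is d-decomposable. -/

import Mathlib

variable {ι : Type*} [DecidableEq ι]

/-- A clutter: an antichain of finite sets (no circuit properly contains another). -/
def IsClutter (C : Set (Finset ι)) : Prop :=
  ∀ e₁ ∈ C, ∀ e₂ ∈ C, e₁ ⊆ e₂ → e₁ = e₂

/-- The independence complex of the clutter with circuit set `C` on ground set `V`:
faces are the subsets of `V` containing no circuit. -/
def indepOn (V : Finset ι) (C : Set (Finset ι)) : Set (Finset ι) :=
  {σ | σ ⊆ V ∧ ∀ e ∈ C, ¬ e ⊆ σ}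

/-- The minimal members of a family of finite sets. -/
def minimalSets (S : Set (Finset ι)) : Set (Finset ι) :=
  {e | e ∈ S ∧ ∀ f ∈ S, f ⊆ e → f = e}

/-- Deletion of a vertex from a clutter: keep the circuits avoiding `v`. -/
def clDel (C : Set (Finset ι)) (v : ι) : Set (Finset ι) :=
  {e | e ∈ C ∧ v ∉ e}

/-- Contraction of a vertex in a clutter: minimal sets among `{e \ {v}}`. -/
def clCon (C : Set (Finset ι)) (v : ι) : Set (Finset ι) :=
  minimalSets ((fun e => e.erase v) '' C)

/-- A simplicial complex: a family of finite sets closed under taking subsets. -/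
def IsComplex (Δ : Set (Finset ι)) : Prop :=
  ∀ σ ∈ Δ, ∀ τ, τ ⊆ σ → τ ∈ Δ

/-- The link of a face `σ`. -/
def link (Δ : Set (Finset ι)) (σ : Finset ι) : Set (Finset ι) :=
  {τ | Disjoint τ σ ∧ τ ∪ σ ∈ Δ}

/-- The face-deletion `Δ \ σ`: faces of `Δ` not containing `σ`. -/
def delFace (Δ : Set (Finset ι)) (σ : Finset ι) : Set (Finset ι) :=
  {τ | τ ∈ Δ ∧ ¬ σ ⊆ τ}

/-- The star of a face `σ`, as a subcomplex. -/
def starC (Δ : Set (Finset ι)) (σ : Finset ι) : Set (Finset ι) :=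
  {τ | τ ∈ Δ ∧ τ ∪ σ ∈ Δ}

/-- A facet: a maximal face. -/
def IsFacet (Δ : Set (Finset ι)) (σ : Finset ι) : Prop :=
  σ ∈ Δ ∧ ∀ τ ∈ Δ, σ ⊆ τ → σ = τ

/-- A shedding face: every face `τ` of the star of `σ` satisfies the exchange property:
for every `v ∈ σ` there is `w ∉ τ` with `(τ ∪ {w}) \ {v}` a face. -/
def SheddingFace (Δ : Set (Finset ι)) (σ : Finset ι) : Prop :=
  ∀ τ ∈ Δ, σ ⊆ τ → ∀ v ∈ σ, ∃ w, w ∉ τ ∧ (insert w τ).erase v ∈ Δ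

/-- Shellability (Björner–Wachs form): an ordering `f 0, f 1, …` of the facets such
that for all `i < j` there are `k < j` and `x ∈ f j` with
`f i ∩ f j ⊆ f k ∩ f j = f j \ {x}`. -/
def Shellable (Δ : Set (Finset ι)) : Prop :=
  ∃ (m : ℕ) (f : Fin m → Finset ι),
    Function.Injective f ∧
    (∀ σ, IsFacet Δ σ ↔ ∃ i, f i = σ) ∧
    ∀ i j : Fin m, i < j →
      ∃ k, k < j ∧ ∃ x ∈ f j, f i ∩ f j ⊆ f k ∩ f j ∧ f k ∩ f j = (f j).erase x

/-- `k`-decomposability (for possibly non-pure complexes): a complex is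
`k`-decomposable if it is a simplex (or degenerate), or has a shedding face of
dimension at most `k` whose deletion and link are both `k`-decomposable. -/
inductive KDecomposable : ℤ → Set (Finset ι) → Prop
  | of_empty (k : ℤ) : KDecomposable k ∅
  | of_simplex (k : ℤ) (σ : Finset ι) : KDecomposable k {τ | τ ⊆ σ}
  | of_shed (k : ℤ) (Δ : Set (Finset ι)) (σ : Finset ι) (hσ : σ ∈ Δ)
      (hne : σ.Nonempty) (hdim : (σ.card : ℤ) ≤ k + 1)
      (hshed : SheddingFace Δ σ)
      (h₁ : KDecomposable k (delFace Δ σ)) (h₂ : KDecomposable k (link Δ σ)) :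
      KDecomposable k Δ

/-- A simplicial vertex of a clutter: any two distinct circuits `e₁, e₂` containing `v`
admit a third circuit `e₃ ⊆ (e₁ ∪ e₂) \ {v}`. -/
def SimplicialVertex (C : Set (Finset ι)) (v : ι) : Prop :=
  ∀ e₁ ∈ C, ∀ e₂ ∈ C, e₁ ≠ e₂ → v ∈ e₁ → v ∈ e₂ →
    ∃ e₃ ∈ C, e₃ ⊆ (e₁ ∪ e₂).erase v

/-- Minors of a clutter (with ground set): obtained by repeated deletions and contractions. -/
inductive Minor : Finset ι → Set (Finset ι) → Finset ι → Set (Finset ι) → Prop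
  | refl (V : Finset ι) (C : Set (Finset ι)) : Minor V C V C
  | del {V C W D} (v : ι) (hv : v ∈ W) (h : Minor V C W D) :
      Minor V C (W.erase v) (clDel D v)
  | con {V C W D} (v : ι) (hv : v ∈ W) (h : Minor V C W D) :
      Minor V C (W.erase v) (clCon D v)

/-- Contractions of a clutter (with ground set): obtained by repeated contractions. -/
inductive ConMinor : Finset ι → Set (Finset ι) → Finset ι → Set (Finset ι) → Prop
  | refl (V : Finset ι) (C : Set (Finset ι)) : ConMinor V C V C
  | con {V C W D} (v : ι) (hv : v ∈ W) (h : ConMinor V C W D) :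
      ConMinor V C (W.erase v) (clCon D v)

/-- A clutter is chordal if every minor with at least one vertex has a simplicial vertex. -/
def Chordal (V : Finset ι) (C : Set (Finset ι)) : Prop :=
  ∀ W D, Minor V C W D → W.Nonempty → ∃ v ∈ W, SimplicialVertex D v

/-- Clutter of minimal non-faces of a complex `Δ` on ground set `V`. -/
def nonfaceClutter (V : Finset ι) (Δ : Set (Finset ι)) : Set (Finset ι) :=
  {e | e ⊆ V ∧ e ∉ Δ ∧ ∀ e', e' ⊂ e → e' ∈ Δ}

/-- `cNon V C d`: the `d`-non-circuits of `C`, i.e. the `d`-subsets of `V`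
that are not circuits of `C`. -/
def cNon (V : Finset ι) (C : Set (Finset ι)) (d : ℕ) : Set (Finset ι) :=
  {e | e ⊆ V ∧ e.card = d ∧ e ∉ C}

/-- Combinatorial Alexander dual of a complex on ground set `V`. -/
def alexDual (V : Finset ι) (Δ : Set (Finset ι)) : Set (Finset ι) :=
  {σ | σ ⊆ V ∧ V \ σ ∉ Δ}

/-- Join of two complexes. -/
def joinC (Δ₁ Δ₂ : Set (Finset ι)) : Set (Finset ι) :=
  {σ | ∃ σ₁ ∈ Δ₁, ∃ σ₂ ∈ Δ₂, σ = σ₁ ∪ σ₂}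

/-!
Shellable ⇒ `d`-decomposable, by induction on the number of facets. In a shelling
`F₁, …, Fₘ` let `R` be the restriction of `Fₘ`, the points `x` with `Fₘ \ {x}` inside an earlier
facet. The shelling condition says that `R` lies in no earlier facet, so the faces containing `R`
are the faces of `Fₘ` containing it: deleting `R` leaves the complex generated by
`F₁, …, Fₘ₋₁`, the link of `R` is the simplex `Fₘ \ R`, and `R` is a shedding face because each
`Fₘ \ {x}`, `x ∈ R`, is a proper subset of an earlier facet. Moreover `dim R ≤ dim Fₘ ≤ d`.

`k`-decomposable ⇒ shellable, by induction on the decomposition. For a shedding face `σ` the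
facets of `Δ` are those of `Δ \ σ` together with the `ρ ∪ σ`, `ρ` a facet of `lk σ`. A shelling
of `Δ \ σ` followed by a shelling of `lk σ` joined with `σ` is a shelling of `Δ`: for a facet
`G ∌ σ` and a later facet `T ⊇ σ`, the exchange property at `T` and a point `v ∈ σ \ G` yields
a facet of `Δ \ σ` meeting `T` in `T \ {v}`.
-/

set_option linter.unusedSectionVars false

open Set

lemma isComplex_delFace {Δ : Set (Finset ι)} (hΔ : IsComplex Δ) (σ : Finset ι) :
    IsComplex (delFace Δ σ) :=
  fun τ ⟨hτ, hστ⟩ ρ hρτ => ⟨hΔ τ hτ ρ hρτ, fun hσρ => hστ (hσρ.trans hρτ)⟩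

lemma isComplex_link {Δ : Set (Finset ι)} (hΔ : IsComplex Δ) (σ : Finset ι) :
    IsComplex (link Δ σ) :=
  fun _ ⟨hτσ, hτ⟩ _ hρτ =>
    ⟨Finset.disjoint_of_subset_left hρτ hτσ, hΔ _ hτ _ (Finset.union_subset_union_left hρτ)⟩

section Facets

variable {Δ : Set (Finset ι)} {σ τ ρ : Finset ι}

lemma isFacet_iff_maximal : IsFacet Δ σ ↔ Maximal (· ∈ Δ) σ :=
  and_congr_right fun _ => forall₂_congr fun _ _ =>
    ⟨fun h hle => (h hle).ge, fun h hle => le_antisymm hle (h hle)⟩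

lemma exists_isFacet_superset [Finite ι] (hσ : σ ∈ Δ) : ∃ τ, IsFacet Δ τ ∧ σ ⊆ τ := by
  obtain ⟨τ, hστ, hτ⟩ := (Set.toFinite Δ).exists_le_maximal hσ
  exact ⟨τ, isFacet_iff_maximal.2 hτ, hστ⟩

lemma IsFacet.isFacet_delFace (hτ : IsFacet Δ τ) (hστ : ¬ σ ⊆ τ) : IsFacet (delFace Δ σ) τ :=
  ⟨⟨hτ.1, hστ⟩, fun ρ hρ => hτ.2 ρ hρ.1⟩

lemma IsFacet.isFacet_link (hτ : IsFacet Δ τ) (hστ : σ ⊆ τ) : IsFacet (link Δ σ) (τ \ σ) := by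
  refine ⟨⟨Finset.sdiff_disjoint, by rw [Finset.sdiff_union_of_subset hστ]; exact hτ.1⟩, ?_⟩
  rintro ρ ⟨hρσ, hρ⟩ hτρ
  have hτ_eq : τ = ρ ∪ σ := hτ.2 _ hρ <| by
    simpa [Finset.sdiff_union_of_subset hστ] using Finset.union_subset_union_left (t := σ) hτρ
  rw [hτ_eq, Finset.union_sdiff_cancel_right hρσ]

lemma IsFacet.of_link (hρ : IsFacet (link Δ σ) ρ) : IsFacet Δ (ρ ∪ σ) := by
  refine ⟨hρ.1.2, fun γ hγ hργ => ?_⟩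
  have hσγ : σ ⊆ γ := Finset.union_subset_iff.1 hργ |>.2
  have hρ_eq : ρ = γ \ σ :=
    hρ.2 _ ⟨Finset.sdiff_disjoint, by rwa [Finset.sdiff_union_of_subset hσγ]⟩
      (Finset.subset_sdiff.2 ⟨Finset.union_subset_iff.1 hργ |>.1, hρ.1.1⟩)
  rw [hρ_eq, Finset.sdiff_union_of_subset hσγ]

/-- A facet `τ` of `Δ \ σ` could only fail to be a facet of `Δ` if every one-point extension of
`τ` in `Δ` contains `σ`; the exchange property at such an extension then produces one that
does not. -/
lemma IsFacet.of_delFace (hΔ : IsComplex Δ) (hshed : SheddingFace Δ σ)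
    (hτ : IsFacet (delFace Δ σ) τ) : IsFacet Δ τ := by
  have hext : ∀ u ∉ τ, insert u τ ∈ Δ → σ ⊆ insert u τ := fun u hu hΔu => by
    by_contra hσu
    exact hu (hτ.2 _ ⟨hΔu, hσu⟩ (Finset.subset_insert u τ) ▸ Finset.mem_insert_self u τ)
  refine ⟨hτ.1.1, fun ρ hρ hτρ => Finset.Subset.antisymm hτρ fun u huρ => ?_⟩
  by_contra huτ
  have hΔu : insert u τ ∈ Δ := hΔ ρ hρ _ (Finset.insert_subset huρ hτρ)
  have hσu := hext u huτ hΔu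
  have huσ : u ∈ σ := by
    by_contra huσ
    exact hτ.1.2 fun x hx =>
      (Finset.mem_insert.1 (hσu hx)).resolve_left (by rintro rfl; exact huσ hx)
  obtain ⟨w, hw, hΔw⟩ := hshed _ hΔu hσu u huσ
  have hwu : w ≠ u := by rintro rfl; exact hw (Finset.mem_insert_self w τ)
  have hwτ : w ∉ τ := fun h => hw (Finset.mem_insert_of_mem h)
  rw [Finset.erase_insert_of_ne hwu, Finset.erase_insert huτ] at hΔw
  have := hext w hwτ hΔw huσ
  simp [Finset.mem_insert, hwu.symm, huτ] at this

lemma isFacet_iff_of_sheddingFace (hΔ : IsComplex Δ) (hshed : SheddingFace Δ σ) :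
    IsFacet Δ τ ↔ IsFacet (delFace Δ σ) τ ∨ ∃ ρ, IsFacet (link Δ σ) ρ ∧ ρ ∪ σ = τ := by
  refine ⟨fun hτ => ?_, ?_⟩
  · by_cases hστ : σ ⊆ τ
    · exact .inr ⟨τ \ σ, hτ.isFacet_link hστ, Finset.sdiff_union_of_subset hστ⟩
    · exact .inl (hτ.isFacet_delFace hστ)
  · rintro (hτ | ⟨ρ, hρ, rfl⟩)
    exacts [hτ.of_delFace hΔ hshed, hρ.of_link]

end Facets

section ShellingOrder

def IsShellingOrder {m : ℕ} (f : Fin m → Finset ι) : Prop :=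
  ∀ i j : Fin m, i < j →
    ∃ k, k < j ∧ ∃ x ∈ f j, f i ∩ f j ⊆ f k ∩ f j ∧ f k ∩ f j = (f j).erase x

variable {m n : ℕ}

lemma IsShellingOrder.castSucc {f : Fin (n + 1) → Finset ι} (hf : IsShellingOrder f) :
    IsShellingOrder fun i : Fin n => f i.castSucc := by
  intro i j hij
  obtain ⟨k, hkj, hk⟩ := hf _ _ (Fin.castSucc_lt_castSucc_iff.2 hij)
  obtain ⟨k, rfl⟩ := Fin.exists_castSucc_eq.2 (Fin.ne_last_of_lt hkj)
  exact ⟨k, Fin.castSucc_lt_castSucc_iff.1 hkj, hk⟩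

lemma IsShellingOrder.union_right {f : Fin m → Finset ι} (hf : IsShellingOrder f) {σ : Finset ι}
    (hσ : ∀ i, Disjoint (f i) σ) : IsShellingOrder fun i => f i ∪ σ := by
  intro i j hij
  obtain ⟨k, hkj, x, hx, hsub, heq⟩ := hf i j hij
  have hxσ : x ∉ σ := Finset.disjoint_left.1 (hσ j) hx
  refine ⟨k, hkj, x, Finset.mem_union_left σ hx, ?_⟩
  simp only [← Finset.inter_union_distrib_right, heq]
  refine ⟨Finset.union_subset_union_left (heq ▸ hsub), ?_⟩
  rw [Finset.erase_union_distrib, Finset.erase_eq_of_notMem hxσ]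

lemma IsShellingOrder.append {g : Fin m → Finset ι} {h : Fin n → Finset ι}
    (hg : IsShellingOrder g) (hh : IsShellingOrder h)
    (hgh : ∀ i j, ∃ k, ∃ x ∈ h j, g i ∩ h j ⊆ g k ∩ h j ∧ g k ∩ h j = (h j).erase x) :
    IsShellingOrder (Fin.append g h) := by
  intro i j hij
  rw [Fin.lt_def] at hij
  induction j using Fin.addCases with
  | left j =>
    induction i using Fin.addCases with
    | left i =>
      obtain ⟨k, hkj, hk⟩ := hg i j (Fin.lt_def.2 (by simpa using hij))
      exact ⟨Fin.castAdd n k, Fin.lt_def.2 (by simpa using Fin.lt_def.1 hkj), by simpa using hk⟩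
    | right i => simp at hij; omega
  | right j =>
    induction i using Fin.addCases with
    | left i =>
      obtain ⟨k, hk⟩ := hgh i j
      exact ⟨Fin.castAdd n k, Fin.lt_def.2 (by simpa using Nat.lt_add_right _ k.2),
        by simpa using hk⟩
    | right i =>
      obtain ⟨k, hkj, hk⟩ := hh i j (Fin.lt_def.2 (by simpa using hij))
      exact ⟨Fin.natAdd m k, Fin.lt_def.2 (by simpa using Fin.lt_def.1 hkj), by simpa using hk⟩

end ShellingOrder

section Decomposable

variable {Δ : Set (Finset ι)} {σ : Finset ι}

/-- The exchange property at a facet `T ⊇ σ` gives a face `(T ∪ {w}) \ {v}`; any facet `F`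
above it misses `v` (else `T ⊊ F`), so it meets `T` in exactly `T \ {v}`. -/
lemma SheddingFace.exists_isFacet_inter_eq_erase [Finite ι] (hshed : SheddingFace Δ σ)
    {T : Finset ι} (hT : IsFacet Δ T) (hσT : σ ⊆ T) {v : ι} (hv : v ∈ σ) :
    ∃ F, IsFacet Δ F ∧ v ∉ F ∧ F ∩ T = T.erase v := by
  obtain ⟨w, hwT, hwΔ⟩ := hshed T hT.1 hσT v hv
  obtain ⟨F, hF, hwF⟩ := exists_isFacet_superset hwΔ
  have hvF : v ∉ F := fun hvF => by
    have hTF : insert w T ⊆ F := by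
      rw [← Finset.insert_erase (Finset.mem_insert_of_mem (hσT hv) : v ∈ insert w T)]
      exact Finset.insert_subset hvF hwF
    have hTF_eq := hT.2 F hF.1 ((Finset.subset_insert w T).trans hTF)
    exact hwT (hTF_eq ▸ hTF (Finset.mem_insert_self w T))
  refine ⟨F, hF, hvF, Finset.Subset.antisymm ?_ ?_⟩
  · exact fun x hx => Finset.mem_erase.2
      ⟨by rintro rfl; exact hvF (Finset.mem_inter.1 hx).1, (Finset.mem_inter.1 hx).2⟩
  · exact fun x hx => Finset.mem_inter.2
      ⟨hwF (Finset.erase_subset_erase v (Finset.subset_insert w T) hx), Finset.mem_of_mem_erase hx⟩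

lemma shellable_empty : Shellable (∅ : Set (Finset ι)) :=
  ⟨0, Fin.elim0, fun i => i.elim0, fun _ => ⟨fun h => h.1.elim, fun ⟨i, _⟩ => i.elim0⟩,
    fun i => i.elim0⟩

lemma shellable_Iic (σ : Finset ι) : Shellable (Iic σ) :=
  ⟨1, fun _ => σ, Function.injective_of_subsingleton _,
    fun _ => ⟨fun hτ => ⟨0, (hτ.2 σ (Set.mem_Iic.2 le_rfl) hτ.1).symm⟩,
      fun ⟨_, hτ⟩ => hτ ▸ ⟨Set.mem_Iic.2 le_rfl, fun _ hρ hσρ => le_antisymm hσρ hρ⟩⟩,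
    fun i j hij => absurd hij (Subsingleton.elim i j ▸ lt_irrefl i)⟩

lemma Shellable.of_sheddingFace [Finite ι] (hΔ : IsComplex Δ) (hshed : SheddingFace Δ σ)
    (hdel : Shellable (delFace Δ σ)) (hlink : Shellable (link Δ σ)) : Shellable Δ := by
  obtain ⟨p, g, hg_inj, hg_facet, hg : IsShellingOrder g⟩ := hdel
  obtain ⟨q, h, hh_inj, hh_facet, hh : IsShellingOrder h⟩ := hlink
  have hg_σ : ∀ i, ¬ σ ⊆ g i := fun i => ((hg_facet _).2 ⟨i, rfl⟩).1.2
  have hh_σ : ∀ j, Disjoint (h j) σ := fun j => ((hh_facet _).2 ⟨j, rfl⟩).1.1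
  refine ⟨p + q, Fin.append g fun j => h j ∪ σ, ?_, fun τ => ?_, hg.append (hh.union_right hh_σ) ?_⟩
  · refine Fin.append_injective_iff.2 ⟨hg_inj, fun j j' hjj' => hh_inj ?_, fun i j hij => ?_⟩
    · rw [← Finset.union_sdiff_cancel_right (hh_σ j), ← Finset.union_sdiff_cancel_right (hh_σ j')]
      exact congrArg (· \ σ) hjj'
    · exact hg_σ i (hij ▸ Finset.subset_union_right)
  · rw [isFacet_iff_of_sheddingFace hΔ hshed, hg_facet]
    constructor
    · rintro (⟨i, rfl⟩ | ⟨ρ, hρ, rfl⟩)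
      · exact ⟨Fin.castAdd q i, Fin.append_left _ _ _⟩
      · obtain ⟨j, rfl⟩ := (hh_facet ρ).1 hρ
        exact ⟨Fin.natAdd p j, Fin.append_right _ _ _⟩
    · rintro ⟨i, rfl⟩
      induction i using Fin.addCases with
      | left i => exact .inl ⟨i, (Fin.append_left _ _ _).symm⟩
      | right j =>
        exact .inr ⟨h j, (hh_facet _).2 ⟨j, rfl⟩, (Fin.append_right g (fun j => h j ∪ σ) j).symm⟩
  · intro i j
    obtain ⟨v, hvσ, hvg⟩ := Finset.not_subset.1 (hg_σ i)
    have hT := ((hh_facet _).2 ⟨j, rfl⟩).of_link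
    obtain ⟨F, hF, hvF, hFT⟩ :=
      hshed.exists_isFacet_inter_eq_erase hT Finset.subset_union_right hvσ
    obtain ⟨k, rfl⟩ := (hg_facet F).1 (hF.isFacet_delFace fun hσF => hvF (hσF hvσ))
    refine ⟨k, v, Finset.subset_union_right hvσ, ?_, hFT⟩
    rw [hFT]
    exact fun x hx => Finset.mem_erase.2 ⟨by rintro rfl; exact hvg (Finset.mem_inter.1 hx).1,
      (Finset.mem_inter.1 hx).2⟩

end Decomposable

theorem KDecomposable.shellable [Finite ι] {k : ℤ} {Δ : Set (Finset ι)} (h : KDecomposable k Δ)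
    (hΔ : IsComplex Δ) : Shellable Δ := by
  induction h with
  | of_empty => exact shellable_empty
  | of_simplex σ => exact shellable_Iic σ
  | of_shed Δ σ _ _ _ hshed _ _ ih_del ih_link =>
    exact .of_sheddingFace hΔ hshed (ih_del (isComplex_delFace hΔ σ))
      (ih_link (isComplex_link hΔ σ))

section AddFacet

variable {Δ : Set (Finset ι)} {F σ τ : Finset ι}

lemma subset_of_mem_union_Iic (hΔ : IsComplex Δ) (hσ : σ ∉ Δ) (hτ : τ ∈ Δ ∪ Iic F)
    (hστ : σ ⊆ τ) : τ ⊆ F :=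
  hτ.resolve_left fun hτΔ => hσ (hΔ τ hτΔ σ hστ)

lemma delFace_union_Iic (hΔ : IsComplex Δ) (hσ : σ ∉ Δ) (hF : ∀ x ∈ σ, F.erase x ∈ Δ) :
    delFace (Δ ∪ Iic F) σ = Δ := by
  ext τ
  refine ⟨fun ⟨hτ, hστ⟩ => hτ.elim id fun hτF => ?_,
    fun hτ => ⟨.inl hτ, fun hστ => hσ (hΔ τ hτ σ hστ)⟩⟩
  obtain ⟨x, hxσ, hxτ⟩ := Finset.not_subset.1 hστ
  exact hΔ _ (hF x hxσ) τ (Finset.subset_erase.2 ⟨hτF, hxτ⟩)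

lemma link_union_Iic (hΔ : IsComplex Δ) (hσ : σ ∉ Δ) (hσF : σ ⊆ F) :
    link (Δ ∪ Iic F) σ = Iic (F \ σ) := by
  ext τ
  simp only [link, mem_ofPred_eq, mem_Iic, Finset.subset_sdiff]
  refine ⟨fun ⟨hτσ, hτ⟩ => ⟨?_, hτσ⟩, fun ⟨hτF, hτσ⟩ => ⟨hτσ, .inr (Finset.union_subset hτF hσF)⟩⟩
  exact Finset.union_subset_iff.1 (subset_of_mem_union_Iic hΔ hσ hτ Finset.subset_union_right) |>.1

/-- At `τ = F` the exchange for `v ∈ σ` uses a face `G ⊋ F \ {v}` of `Δ`: a point `w` of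
`G \ (F \ {v})` is not `v`, since otherwise `σ ⊆ F ⊆ G ∈ Δ`. -/
lemma sheddingFace_union_Iic (hΔ : IsComplex Δ) (hσ : σ ∉ Δ)
    (hF : ∀ x ∈ σ, ∃ G ∈ Δ, F.erase x ⊂ G) : SheddingFace (Δ ∪ Iic F) σ := by
  intro τ hτ hστ v hv
  obtain rfl | hτF := (subset_of_mem_union_Iic hΔ hσ hτ hστ).eq_or_ssubset
  · obtain ⟨G, hG, hτG⟩ := hF v hv
    obtain ⟨w, hwG, hwτ⟩ := Finset.exists_of_ssubset hτG
    have hwv : w ≠ v := by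
      rintro rfl
      refine hσ (hΔ G hG σ (hστ.trans ?_))
      rw [← Finset.insert_erase (hστ hv)]
      exact Finset.insert_subset hwG hτG.subset
    refine ⟨w, fun hw => hwτ (Finset.mem_erase.2 ⟨hwv, hw⟩), .inl (hΔ G hG _ ?_)⟩
    rw [Finset.erase_insert_of_ne hwv]
    exact Finset.insert_subset hwG hτG.subset
  · obtain ⟨w, hwF, hwτ⟩ := Finset.exists_of_ssubset hτF
    exact ⟨w, hwτ, .inr ((Finset.erase_subset v _).trans (Finset.insert_subset hwF hτF.subset))⟩

lemma KDecomposable.union_Iic {k : ℤ} (h : KDecomposable k Δ) (hΔ : IsComplex Δ) (hσ : σ ∉ Δ)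
    (hσF : σ ⊆ F) (hσ_ne : σ.Nonempty) (hF_card : (F.card : ℤ) ≤ k + 1)
    (hF : ∀ x ∈ σ, ∃ G ∈ Δ, F.erase x ⊂ G) : KDecomposable k (Δ ∪ Iic F) := by
  refine .of_shed k _ σ (.inr hσF) hσ_ne ((Nat.cast_le.2 (Finset.card_le_card hσF)).trans hF_card)
    (sheddingFace_union_Iic hΔ hσ hF) ?_ ?_
  · rwa [delFace_union_Iic hΔ hσ fun x hx => (hF x hx).elim fun G ⟨hG, hFG⟩ => hΔ G hG _ hFG.subset]
  · rw [link_union_Iic hΔ hσ hσF]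
    exact .of_simplex k _

end AddFacet

section Restriction

variable {n : ℕ}

/-- The restriction of `F` with respect to the earlier facets `g`. When `g, F` is a shelling
order, the faces of `F` not generated by `g` are exactly those containing it. -/
def restriction (g : Fin n → Finset ι) (F : Finset ι) : Finset ι :=
  {x ∈ F | ∃ k, F.erase x ⊆ g k}

variable {f : Fin (n + 1) → Finset ι}

lemma IsShellingOrder.not_restriction_subset (hf : IsShellingOrder f) (i : Fin n) :
    ¬ restriction (fun i => f i.castSucc) (f (Fin.last n)) ⊆ f i.castSucc := by
  intro hR
  obtain ⟨k, hk, x, hx, hsub, heq⟩ := hf i.castSucc (Fin.last n) (Fin.castSucc_lt_last i)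
  obtain ⟨k, rfl⟩ := Fin.exists_castSucc_eq.2 (Fin.ne_last_of_lt hk)
  have hxR : x ∈ restriction (fun i => f i.castSucc) (f (Fin.last n)) :=
    Finset.mem_filter.2 ⟨hx, k, heq ▸ Finset.inter_subset_left⟩
  have hx' := hsub (Finset.mem_inter.2 ⟨hR hxR, hx⟩)
  rw [heq] at hx'
  exact Finset.notMem_erase x _ hx'

lemma exists_erase_ssubset_of_mem_restriction (hf : ∀ i j, f i ⊆ f j → i = j) {x : ι}
    (hx : x ∈ restriction (fun i => f i.castSucc) (f (Fin.last n))) :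
    ∃ k : Fin n, (f (Fin.last n)).erase x ⊂ f k.castSucc := by
  obtain ⟨-, k, hk⟩ := Finset.mem_filter.1 hx
  refine ⟨k, Finset.ssubset_iff_subset_ne.2 ⟨hk, fun h => ?_⟩⟩
  exact Fin.castSucc_ne_last k (hf _ _ (h ▸ Finset.erase_subset x _))

end Restriction

lemma IsLowerSet.isComplex {Δ : Set (Finset ι)} (hΔ : IsLowerSet Δ) : IsComplex Δ :=
  fun _ hσ _ hτσ => hΔ hτσ hσ

lemma coe_lowerClosure_range_fin_succ {α : Type*} [Preorder α] {n : ℕ} (f : Fin (n + 1) → α) :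
    (lowerClosure (range f) : Set α) =
      (lowerClosure (range fun i : Fin n => f i.castSucc) : Set α) ∪ Iic (f (Fin.last n)) := by
  ext x
  simp [Fin.exists_fin_succ']

theorem kDecomposable_lowerClosure_range {k : ℤ} :
    ∀ {m : ℕ} (f : Fin m → Finset ι), (∀ i j, f i ⊆ f j → i = j) →
      (∀ i, ((f i).card : ℤ) ≤ k + 1) → IsShellingOrder f →
      KDecomposable k (lowerClosure (range f) : Set (Finset ι))
  | 0, f, _, _, _ => by simpa [range_eq_empty] using KDecomposable.of_empty k
  | n + 1, f, hf_anti, hf_card, hf => by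
    set g : Fin n → Finset ι := fun i => f i.castSucc
    have hg : KDecomposable k (lowerClosure (range g) : Set (Finset ι)) :=
      kDecomposable_lowerClosure_range g (fun i j hij => Fin.castSucc_injective _ (hf_anti _ _ hij))
        (fun i => hf_card _) hf.castSucc
    have hR : restriction g (f (Fin.last n)) ∉ lowerClosure (range g) := by
      rintro ⟨_, ⟨i, rfl⟩, hRi⟩
      exact hf.not_restriction_subset i hRi
    rw [coe_lowerClosure_range_fin_succ]
    cases isEmpty_or_nonempty (Fin n)
    · rw [range_eq_empty, lowerClosure_empty, LowerSet.coe_bot, empty_union]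
      exact .of_simplex k _
    obtain ⟨x, hx, -⟩ := Finset.not_subset.1 (hf.not_restriction_subset (Classical.arbitrary _))
    refine hg.union_Iic (lowerClosure _).lower.isComplex hR (Finset.filter_subset _ _) ⟨x, hx⟩
      (hf_card _) fun y hy => ?_
    obtain ⟨j, hj⟩ := exists_erase_ssubset_of_mem_restriction hf_anti hy
    exact ⟨g j, subset_lowerClosure ⟨j, rfl⟩, hj⟩

lemma eq_lowerClosure_range_of_isFacet_iff [Finite ι] {Δ : Set (Finset ι)} {m : ℕ}
    {f : Fin m → Finset ι} (hΔ : IsComplex Δ) (hf : ∀ σ, IsFacet Δ σ ↔ ∃ i, f i = σ) :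
    Δ = lowerClosure (range f) := by
  ext σ
  refine ⟨fun hσ => ?_, ?_⟩
  · obtain ⟨τ, hτ, hστ⟩ := exists_isFacet_superset hσ
    obtain ⟨i, rfl⟩ := (hf τ).1 hτ
    exact ⟨_, ⟨i, rfl⟩, hστ⟩
  · rintro ⟨_, ⟨i, rfl⟩, hσi⟩
    exact hΔ _ ((hf _).2 ⟨i, rfl⟩).1 σ hσi

theorem stmt6_general [Fintype ι] (Δ : Set (Finset ι)) (hΔ : IsComplex Δ) (d : ℕ)
    (hdim : ∀ σ ∈ Δ, σ.card ≤ d + 1) :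
    Shellable Δ ↔ KDecomposable (d : ℤ) Δ := by
  refine ⟨fun ⟨m, f, hf_inj, hf_facet, hf⟩ => ?_, fun h => h.shellable hΔ⟩
  have hf_mem : ∀ i, IsFacet Δ (f i) := fun i => (hf_facet _).2 ⟨i, rfl⟩
  have hf_anti : ∀ i j, f i ⊆ f j → i = j :=
    fun i j hij => hf_inj ((hf_mem i).2 _ (hf_mem j).1 hij)
  rw [eq_lowerClosure_range_of_isFacet_iff hΔ hf_facet]
  exact kDecomposable_lowerClosure_range f hf_anti
    (fun i => by exact_mod_cast hdim _ (hf_mem i).1) hf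

/-- a `d`-dimensional complex is shellable iff it is `d`-decomposable. -/
theorem stmt6 [Fintype ι] (Δ : Set (Finset ι)) (hΔ : IsComplex Δ) (d : ℕ)
    (hdim : ∀ σ ∈ Δ, σ.card ≤ d + 1) (hd : ∃ σ ∈ Δ, σ.card = d + 1) :
    Shellable Δ ↔ KDecomposable (d : ℤ) Δ :=
  stmt6_general Δ hΔ d hdim
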